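/- arXiv:1209.6589 — 3 statements merged into one kernel-verified Lean document; each statement's English description precedes it below -/
import Mathlib

section
/- Suppose x_{m+1} = A_m x_m admits a general dichotomy with bounds (a_{m,n}) and (b_{m,n}), the f_m are Lipschitz with f_m(0)=0, and α < +∞. Fix φ ∈ 𝒳 and n ∈ ℕ, and define the operator J on ℬ_n by (Jx)_n(ξ) = ξ and (Jx)_m(ξ) = 𝒜_{m,n}ξ + Σ_{k=n}^{m−1} 𝒜_{m,k+1} P_{k+1} f_k(x_k(ξ) + φ_k(x_k(ξ))) for m > n. Then for all x, y ∈ ℬ_n one has ‖Jx − Jy‖_n ≤ 2α ‖x − y‖_n; in particular, if α < 1/2 then J is a contraction on ℬ_n. -/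
/-!
Subtracting the two defining sums of `J`, the linear term `𝒜_{m,n} ξ` cancels and only the
perturbation terms remain. By (D1) and the Lipschitz bounds, the `k`-th of them is at most
`a_{m,k+1} Lip(f_k) ‖(x_k + φ_k x_k)(ξ) - (y_k + φ_k y_k)(ξ)‖`, and since `φ_k` is
`1`-Lipschitz this is at most `2 a_{m,k+1} a_{k,n} Lip(f_k) ‖x - y‖_n ‖ξ‖`. Summing over `k`,
the definition of `α` bounds the total by `2 α a_{m,n} ‖x - y‖_n ‖ξ‖`.
-/

/-- `calA A m n` is the linear evolution operator
`𝒜_{m,n} = A_{m-1} ∘ ⋯ ∘ A_n` (and the identity if `m ≤ n`). -/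
def calA {X : Type*} [NormedAddCommGroup X] [NormedSpace ℝ X]
    (A : ℕ → X →L[ℝ] X) : ℕ → ℕ → X →L[ℝ] X
  | 0, _ => ContinuousLinearMap.id ℝ X
  | m + 1, n => if m + 1 ≤ n then ContinuousLinearMap.id ℝ X else (A m).comp (calA A m n)

section

variable {X : Type*} [NormedAddCommGroup X] [NormedSpace ℝ X]

@[simp]
theorem calA_self (A : ℕ → X →L[ℝ] X) (n : ℕ) : calA A n n = ContinuousLinearMap.id ℝ X := by
  cases n <;> simp [calA]

theorem eq_calA_add_sum_of_le {A : ℕ → X →L[ℝ] X} {F : ℕ → X} {g : ℕ → ℕ → X} {n m : ℕ}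
    {ξ : X} (h0 : F n = ξ)
    (h : ∀ m, n < m → F m = calA A m n ξ + ∑ k ∈ Finset.Ico n m, g m k) (hnm : n ≤ m) :
    F m = calA A m n ξ + ∑ k ∈ Finset.Ico n m, g m k := by
  rcases hnm.eq_or_lt with rfl | hlt
  · simp [h0]
  · exact h m hlt

end

theorem norm_sum_apply_sub_sum_apply_le {𝕜 E F ι : Type*} [NontriviallyNormedField 𝕜]
    [SeminormedAddCommGroup E] [NormedSpace 𝕜 E] [SeminormedAddCommGroup F] [NormedSpace 𝕜 F]
    (s : Finset ι) (T : ι → E →L[𝕜] F) (c : ι → ℝ) (hT : ∀ k ∈ s, ‖T k‖ ≤ c k) (g h : ι → E) :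
    ‖∑ k ∈ s, T k (g k) - ∑ k ∈ s, T k (h k)‖ ≤ ∑ k ∈ s, c k * ‖g k - h k‖ := by
  rw [← Finset.sum_sub_distrib]
  refine (norm_sum_le _ _).trans (Finset.sum_le_sum fun k hk => ?_)
  rw [← map_sub]
  exact (T k).le_of_opNorm_le (hT k hk) _

theorem norm_apply_add_sub_apply_add_le {E F : Type*} [SeminormedAddCommGroup E]
    [SeminormedAddCommGroup F] {f : E → F} {K : ℝ} (hK : 0 ≤ K)
    (hf : ∀ u v, ‖f u - f v‖ ≤ K * ‖u - v‖) {u u' v v' : E} (hv : ‖v - v'‖ ≤ ‖u - u'‖) :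
    ‖f (u + v) - f (u' + v')‖ ≤ 2 * K * ‖u - u'‖ :=
  calc ‖f (u + v) - f (u' + v')‖
      ≤ K * ‖(u - u') + (v - v')‖ := by rw [← add_sub_add_comm]; exact hf _ _
    _ ≤ K * (‖u - u'‖ + ‖v - v'‖) := by gcongr; exact norm_add_le _ _
    _ ≤ 2 * K * ‖u - u'‖ := by nlinarith

theorem sum_le_mul_of_isLUB {a : ℕ → ℕ → ℝ} {L : ℕ → ℝ} {α : ℝ}
    (ha : ∀ m n : ℕ, n ≤ m → 0 < a m n) (hL0 : ∀ k, 0 ≤ L k)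
    (hα : IsLUB {r : ℝ | ∃ m n : ℕ, n < m ∧
      r = (∑ k ∈ Finset.Ico n m, a m (k + 1) * (a k n * L k)) / a m n} α)
    {m n : ℕ} (hnm : n ≤ m) :
    ∑ k ∈ Finset.Ico n m, a m (k + 1) * (a k n * L k) ≤ α * a m n := by
  have hle : ∀ m n, n < m → (∑ k ∈ Finset.Ico n m, a m (k + 1) * (a k n * L k)) / a m n ≤ α :=
    fun m n h => hα.1 ⟨m, n, h, rfl⟩
  rcases hnm.eq_or_lt with rfl | hlt
  · have hα0 : 0 ≤ α := by
      refine le_trans ?_ (hle 1 0 one_pos)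
      have := ha 1 1 le_rfl; have := ha 0 0 le_rfl; have := ha 1 0 zero_le_one
      have := hL0 0
      simp only [Nat.Ico_succ_singleton, Finset.sum_singleton, zero_add]
      positivity
    simpa using mul_nonneg hα0 (ha n n le_rfl).le
  · exact (div_le_iff₀ (ha m n hnm)).mp (hle m n hlt)

theorem J_contraction_general
    {X : Type*} [NormedAddCommGroup X] [NormedSpace ℝ X]
    (A P : ℕ → X →L[ℝ] X) (a : ℕ → ℕ → ℝ)
    -- the bounds are positive
    (ha : ∀ m n : ℕ, n ≤ m → 0 < a m n)
    -- (D1) : `‖𝒜_{m,n} P n‖ ≤ a m n`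
    (hD1 : ∀ m n : ℕ, n ≤ m → ‖(calA A m n).comp (P n)‖ ≤ a m n)
    -- the perturbations `f k` vanish at `0` and are Lipschitz with constant `L k`
    (f : ℕ → X → X) (L : ℕ → ℝ) (hL0 : ∀ k, 0 ≤ L k)
    (hLip : ∀ (k : ℕ) (u v : X), ‖f k u - f k v‖ ≤ L k * ‖u - v‖)
    -- `α = sup_{m>n} (1/a_{m,n}) ∑_{k=n}^{m-1} a_{m,k+1} a_{k,n} Lip(f k) < ∞`
    (α : ℝ)
    (hα : IsLUB {r : ℝ | ∃ m n : ℕ, n < m ∧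
      r = (∑ k ∈ Finset.Ico n m, a m (k + 1) * (a k n * L k)) / a m n} α)
    (φ : ∀ n : ℕ, LinearMap.range (P n : X →ₗ[ℝ] X) → LinearMap.ker (P n : X →ₗ[ℝ] X))
    (hφ : ((∀ n, φ n 0 = 0) ∧
      ∀ (n : ℕ) (ξ ξ' : LinearMap.range (P n : X →ₗ[ℝ] X)),
        ‖(φ n ξ : X) - (φ n ξ' : X)‖ ≤ ‖(ξ : X) - (ξ' : X)‖))
    (n : ℕ) (x : ∀ m : ℕ, LinearMap.range (P n : X →ₗ[ℝ] X) → LinearMap.range (P m : X →ₗ[ℝ] X))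
    (y : ∀ m : ℕ, LinearMap.range (P n : X →ₗ[ℝ] X) → LinearMap.range (P m : X →ₗ[ℝ] X))
    -- `M` is an upper bound for `‖x - y‖_n`
    (M : ℝ)
    (hM : ∀ m : ℕ, n ≤ m → ∀ ξ : LinearMap.range (P n : X →ₗ[ℝ] X),
      ‖(x m ξ : X) - (y m ξ : X)‖ ≤ M * (a m n * ‖(ξ : X)‖))
    (Jx Jy : ∀ m : ℕ, LinearMap.range (P n : X →ₗ[ℝ] X) → LinearMap.range (P m : X →ₗ[ℝ] X))
    (hJ0 : ∀ ξ : LinearMap.range (P n : X →ₗ[ℝ] X), Jx n ξ = ξ)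
    (hJ : ∀ m : ℕ, n < m → ∀ ξ : LinearMap.range (P n : X →ₗ[ℝ] X),
      (Jx m ξ : X) = calA A m n (ξ : X) +
        ∑ k ∈ Finset.Ico n m,
          calA A m (k + 1) (P (k + 1) (f k ((x k ξ : X) + (φ k (x k ξ) : X)))))
    (hJy0 : ∀ ξ : LinearMap.range (P n : X →ₗ[ℝ] X), Jy n ξ = ξ)
    (hJy : ∀ m : ℕ, n < m → ∀ ξ : LinearMap.range (P n : X →ₗ[ℝ] X),
      (Jy m ξ : X) = calA A m n (ξ : X) +
        ∑ k ∈ Finset.Ico n m,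
          calA A m (k + 1) (P (k + 1) (f k ((y k ξ : X) + (φ k (y k ξ) : X)))))
    :
    ∀ m : ℕ, n ≤ m → ∀ ξ : LinearMap.range (P n : X →ₗ[ℝ] X),
      ‖(Jx m ξ : X) - (Jy m ξ : X)‖ ≤ 2 * α * M * (a m n * ‖(ξ : X)‖) := by
  intro m hm ξ
  have hMξ : 0 ≤ M * ‖(ξ : X)‖ := by
    have := (norm_nonneg _).trans (hM n le_rfl ξ)
    nlinarith [ha n n le_rfl]
  have hstep : ∀ k ∈ Finset.Ico n m,
      ‖f k ((x k ξ : X) + (φ k (x k ξ) : X)) - f k ((y k ξ : X) + (φ k (y k ξ) : X))‖ ≤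
        a k n * L k * (2 * (M * ‖(ξ : X)‖)) := fun k hk =>
    calc _ ≤ 2 * L k * ‖(x k ξ : X) - (y k ξ : X)‖ :=
          norm_apply_add_sub_apply_add_le (hL0 k) (hLip k) (hφ.2 k _ _)
      _ ≤ 2 * L k * (M * (a k n * ‖(ξ : X)‖)) :=
          mul_le_mul_of_nonneg_left (hM k (Finset.mem_Ico.mp hk).1 ξ) (by linarith [hL0 k])
      _ = a k n * L k * (2 * (M * ‖(ξ : X)‖)) := by ring
  rw [eq_calA_add_sum_of_le (congrArg Subtype.val (hJ0 ξ)) (fun m h => hJ m h ξ) hm,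
    eq_calA_add_sum_of_le (congrArg Subtype.val (hJy0 ξ)) (fun m h => hJy m h ξ) hm,
    add_sub_add_left_eq_sub]
  calc _ ≤ ∑ k ∈ Finset.Ico n m, a m (k + 1) *
        ‖f k ((x k ξ : X) + (φ k (x k ξ) : X)) - f k ((y k ξ : X) + (φ k (y k ξ) : X))‖ :=
        norm_sum_apply_sub_sum_apply_le _ (fun k => (calA A m (k + 1)).comp (P (k + 1))) _
          (fun k hk => hD1 m (k + 1) (Finset.mem_Ico.mp hk).2) _ _
    _ ≤ ∑ k ∈ Finset.Ico n m, a m (k + 1) * (a k n * L k) * (2 * (M * ‖(ξ : X)‖)) :=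
        Finset.sum_le_sum fun k hk => by
          rw [mul_assoc]
          exact mul_le_mul_of_nonneg_left (hstep k hk) (ha m (k + 1) (Finset.mem_Ico.mp hk).2).le
    _ ≤ α * a m n * (2 * (M * ‖(ξ : X)‖)) := by
        rw [← Finset.sum_mul]
        exact mul_le_mul_of_nonneg_right (sum_le_mul_of_isLUB ha hL0 hα hm) (by positivity)
    _ = 2 * α * M * (a m n * ‖(ξ : X)‖) := by ring

/-- The operator `J` satisfies `‖J x - J y‖_n ≤ 2 α ‖x - y‖_n`; in particular it is a
contraction on `ℬ_n` when `α < 1/2`. -/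
theorem J_contraction
    {X : Type*} [NormedAddCommGroup X] [NormedSpace ℝ X] [CompleteSpace X]
    (A P : ℕ → X →L[ℝ] X) (B : ℕ → ℕ → X →L[ℝ] X) (a b : ℕ → ℕ → ℝ)
    -- the bounds are positive
    (ha : ∀ m n : ℕ, n ≤ m → 0 < a m n) (hb : ∀ m n : ℕ, n ≤ m → 0 < b m n)
    -- the `P n` are bounded projections
    (hproj : ∀ n, (P n).comp (P n) = P n)
    -- (S1) : `P m ∘ 𝒜_{m,n} = 𝒜_{m,n} ∘ P n`
    (hS1 : ∀ m n : ℕ, n ≤ m → (P m).comp (calA A m n) = (calA A m n).comp (P n))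
    -- (S2)/(S3) : `B m n` is the operator `(𝒜_{m,n}|_{F n})⁻¹ ∘ Q m`, where `Q m = Id - P m`;
    -- its existence encodes that `𝒜_{m,n}` maps `F n = ker (P n)` bijectively onto `F m`
    (hB1 : ∀ m n : ℕ, n ≤ m → ∀ x : X, calA A m n (B m n x) = x - P m x)
    (hB2 : ∀ m n : ℕ, n ≤ m → ∀ x : X, B m n (calA A m n x) = x - P n x)
    (hBF : ∀ m n : ℕ, n ≤ m → ∀ x : X, P n (B m n x) = 0)
    -- (D1) : `‖𝒜_{m,n} P n‖ ≤ a m n`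
    (hD1 : ∀ m n : ℕ, n ≤ m → ‖(calA A m n).comp (P n)‖ ≤ a m n)
    -- (D2) : `‖(𝒜_{m,n}|_{F n})⁻¹ Q m‖ ≤ b m n`
    (hD2 : ∀ m n : ℕ, n ≤ m → ‖B m n‖ ≤ b m n)
    -- the perturbations `f k` vanish at `0` and are Lipschitz with constant `L k`
    (f : ℕ → X → X) (L : ℕ → ℝ) (hL0 : ∀ k, 0 ≤ L k) (hf0 : ∀ k, f k 0 = 0)
    (hLip : ∀ (k : ℕ) (u v : X), ‖f k u - f k v‖ ≤ L k * ‖u - v‖)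
    -- `α = sup_{m>n} (1/a_{m,n}) ∑_{k=n}^{m-1} a_{m,k+1} a_{k,n} Lip(f k) < ∞`
    (α : ℝ)
    (hα : IsLUB {r : ℝ | ∃ m n : ℕ, n < m ∧
      r = (∑ k ∈ Finset.Ico n m, a m (k + 1) * (a k n * L k)) / a m n} α)
    (φ : ∀ n : ℕ, LinearMap.range (P n : X →ₗ[ℝ] X) → LinearMap.ker (P n : X →ₗ[ℝ] X))
    (hφ : ((∀ n, φ n 0 = 0) ∧
      ∀ (n : ℕ) (ξ ξ' : LinearMap.range (P n : X →ₗ[ℝ] X)),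
        ‖(φ n ξ : X) - (φ n ξ' : X)‖ ≤ ‖(ξ : X) - (ξ' : X)‖))
    (n : ℕ) (x : ∀ m : ℕ, LinearMap.range (P n : X →ₗ[ℝ] X) → LinearMap.range (P m : X →ₗ[ℝ] X))
    -- `x ∈ ℬ_n`
    (hx0 : ∀ m : ℕ, n ≤ m → x m 0 = 0)
    (hxC : ∃ C : ℝ, ∀ m : ℕ, n ≤ m → ∀ ξ : LinearMap.range (P n : X →ₗ[ℝ] X),
      ‖(x m ξ : X)‖ ≤ C * (a m n * ‖(ξ : X)‖))
    (y : ∀ m : ℕ, LinearMap.range (P n : X →ₗ[ℝ] X) → LinearMap.range (P m : X →ₗ[ℝ] X))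
    (hy0 : ∀ m : ℕ, n ≤ m → y m 0 = 0)
    (hyC : ∃ C : ℝ, ∀ m : ℕ, n ≤ m → ∀ ξ : LinearMap.range (P n : X →ₗ[ℝ] X),
      ‖(y m ξ : X)‖ ≤ C * (a m n * ‖(ξ : X)‖))
    -- `M` is an upper bound for `‖x - y‖_n`
    (M : ℝ)
    (hM : ∀ m : ℕ, n ≤ m → ∀ ξ : LinearMap.range (P n : X →ₗ[ℝ] X),
      ‖(x m ξ : X) - (y m ξ : X)‖ ≤ M * (a m n * ‖(ξ : X)‖))
    (Jx Jy : ∀ m : ℕ, LinearMap.range (P n : X →ₗ[ℝ] X) → LinearMap.range (P m : X →ₗ[ℝ] X))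
    (hJ0 : ∀ ξ : LinearMap.range (P n : X →ₗ[ℝ] X), Jx n ξ = ξ)
    (hJ : ∀ m : ℕ, n < m → ∀ ξ : LinearMap.range (P n : X →ₗ[ℝ] X),
      (Jx m ξ : X) = calA A m n (ξ : X) +
        ∑ k ∈ Finset.Ico n m,
          calA A m (k + 1) (P (k + 1) (f k ((x k ξ : X) + (φ k (x k ξ) : X)))))
    (hJy0 : ∀ ξ : LinearMap.range (P n : X →ₗ[ℝ] X), Jy n ξ = ξ)
    (hJy : ∀ m : ℕ, n < m → ∀ ξ : LinearMap.range (P n : X →ₗ[ℝ] X),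
      (Jy m ξ : X) = calA A m n (ξ : X) +
        ∑ k ∈ Finset.Ico n m,
          calA A m (k + 1) (P (k + 1) (f k ((y k ξ : X) + (φ k (y k ξ) : X)))))
    :
    ∀ m : ℕ, n ≤ m → ∀ ξ : LinearMap.range (P n : X →ₗ[ℝ] X),
      ‖(Jx m ξ : X) - (Jy m ξ : X)‖ ≤ 2 * α * M * (a m n * ‖(ξ : X)‖) :=
  J_contraction_general A P a ha hD1 f L hL0 hLip α hα φ hφ n x y M hM Jx Jy hJ0 hJ hJy0 hJy
end

section
/- Suppose x_{m+1} = A_m x_m admits a general dichotomy with bounds (a_{m,n}) and (b_{m,n}), the f_m are Lipschitz with f_m(0)=0, α < +∞, β < +∞, and 2α + max{2β, √β} < 1. Define the operator Φ on 𝒳 by (Φφ)_n(ξ) = − Σ_{k=n}^{∞} (𝒜_{k+1,n}|_{F_n})^{−1} Q_{k+1} f_k(x^φ_{n,k}(ξ) + φ_k(x^φ_{n,k}(ξ))). Then for all φ, ψ ∈ 𝒳, d(Φφ, Φψ) ≤ (β/(1 − 2α)²) d(φ, ψ), where d(φ,ψ) = sup{‖φ_n(ξ) − ψ_n(ξ)‖/‖ξ‖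 : n ∈ ℕ, ξ ∈ E_n \ {0}}; in particular, since β/(1 − 2α)² < 1, Φ is a contraction on 𝒳. -/
open Finset

theorem forall_le_div_one_sub_mul_of_bootstrap {ι : Type*} {s : Set ι} (hs : s.Nonempty)
    {u w : ι → ℝ} (hw : ∀ i ∈ s, 0 < w i) {C p q : ℝ} (hq : q < 1)
    (hC : ∀ i ∈ s, u i ≤ C * w i)
    (hstep : ∀ ρ, (∀ i ∈ s, u i ≤ ρ * w i) → ∀ i ∈ s, u i ≤ (p + q * ρ) * w i) :
    ∀ i ∈ s, u i ≤ p / (1 - q) * w i := by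
  have hbdd : BddAbove ((fun i => u i / w i) '' s) := by
    refine ⟨C, ?_⟩
    rintro _ ⟨i, hi, rfl⟩
    exact (div_le_iff₀ (hw i hi)).2 (hC i hi)
  set ρ := sSup ((fun i => u i / w i) '' s)
  have hρ : ∀ i ∈ s, u i ≤ ρ * w i := fun i hi =>
    (div_le_iff₀ (hw i hi)).1 (le_csSup hbdd ⟨i, hi, rfl⟩)
  have hρ_le : ρ ≤ p + q * ρ := by
    refine csSup_le (hs.image _) ?_
    rintro _ ⟨i, hi, rfl⟩
    exact (div_le_iff₀ (hw i hi)).2 (hstep ρ hρ i hi)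
  have hρp : ρ ≤ p / (1 - q) := by
    rw [le_div_iff₀ (by linarith)]
    linarith
  exact fun i hi => (hρ i hi).trans (mul_le_mul_of_nonneg_right hρp (hw i hi).le)

theorem norm_sub_le_of_hasSum {E F : Type*} [NormedAddCommGroup E] [NormedAddCommGroup F]
    [NormedSpace ℝ E] [NormedSpace ℝ F] {T : ℕ → E →L[ℝ] F} {u v : ℕ → E} {s t : F}
    (hs : HasSum (fun j => T j (u j)) s) (ht : HasSum (fun j => T j (v j)) t)
    {τ ℓ : ℕ → ℝ} {K : ℝ} (hT : ∀ j, ‖T j‖ ≤ τ j) (huv : ∀ j, ‖u j - v j‖ ≤ ℓ j * K)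
    (hτℓ : Summable fun j => τ j * ℓ j) :
    ‖s - t‖ ≤ (∑' j, τ j * ℓ j) * K := by
  refine (hs.sub ht).norm_le_of_bounded (hτℓ.hasSum.mul_right K) fun j => ?_
  rw [← map_sub, mul_assoc]
  exact (T j).le_of_opNorm_le_of_le (hT j) (huv j)

theorem norm_sub_apply_add_le {X : Type*} [NormedAddCommGroup X] {g : X → X} {ℓ : ℝ}
    (hg : ∀ u v, ‖g u - g v‖ ≤ ℓ * ‖u - v‖) (hℓ : 0 ≤ ℓ) {x y x' y' : X} {σ γ d w : ℝ}
    (hd : 0 ≤ d) (hxy : ‖x - y‖ ≤ σ * w) (hy : ‖y‖ ≤ γ * w)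
    (hxy' : ‖x' - y'‖ ≤ ‖x - y‖ + d * ‖y‖) :
    ‖g (x + x') - g (y + y')‖ ≤ ℓ * ((2 * σ + d * γ) * w) := by
  refine (hg _ _).trans (mul_le_mul_of_nonneg_left ?_ hℓ)
  have hdy : d * ‖y‖ ≤ d * (γ * w) := mul_le_mul_of_nonneg_left hy hd
  calc ‖x + x' - (y + y')‖ = ‖(x - y) + (x' - y')‖ := by rw [add_sub_add_comm]
    _ ≤ ‖x - y‖ + ‖x' - y'‖ := norm_add_le _ _
    _ ≤ (2 * σ + d * γ) * w := by linarith

theorem div_one_sub_two_mul_sq_lt_one {α β : ℝ} (h : 2 * α + √β < 1) :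
    β / (1 - 2 * α) ^ 2 < 1 := by
  have hsqrt : √β < 1 - 2 * α := by linarith
  have hpos : 0 < 1 - 2 * α := (Real.sqrt_nonneg β).trans_lt hsqrt
  exact (div_lt_one (by positivity)).2 ((Real.sqrt_lt' hpos).1 hsqrt)

section Dichotomy

variable {X : Type*} [NormedAddCommGroup X] [NormedSpace ℝ X]

/-- The distance `d(φ, ψ)` of the paper. -/
noncomputable def ratioDist {E F : ℕ → Submodule ℝ X} (φ ψ : ∀ k, E k → F k) : ℝ :=
  sSup {r : ℝ | ∃ (k : ℕ) (ζ : E k), ζ ≠ 0 ∧ r = ‖(φ k ζ : X) - (ψ k ζ : X)‖ / ‖(ζ : X)‖}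

theorem norm_sub_le_ratioDist_mul {E F : ℕ → Submodule ℝ X} {φ ψ : ∀ k, E k → F k}
    (hφ : ∀ k ζ, ‖(φ k ζ : X)‖ ≤ ‖(ζ : X)‖) (hψ : ∀ k ζ, ‖(ψ k ζ : X)‖ ≤ ‖(ζ : X)‖)
    (k : ℕ) (ζ : E k) :
    ‖(φ k ζ : X) - (ψ k ζ : X)‖ ≤ ratioDist φ ψ * ‖(ζ : X)‖ := by
  have hsub : ∀ j (η : E j), ‖(φ j η : X) - (ψ j η : X)‖ ≤ 2 * ‖(η : X)‖ := fun j η =>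
    (norm_sub_le _ _).trans (by linarith [hφ j η, hψ j η])
  rcases eq_or_ne ζ 0 with rfl | hζ
  · simpa using hsub k 0
  have hζ' : 0 < ‖(ζ : X)‖ := norm_pos_iff.2 (by simpa using hζ)
  refine (div_le_iff₀ hζ').1 (le_csSup ⟨2, ?_⟩ ⟨k, ζ, hζ, rfl⟩)
  rintro _ ⟨j, η, -, rfl⟩
  exact div_le_of_le_mul₀ (norm_nonneg _) zero_le_two (hsub j η)

theorem ratioDist_nonneg {E F : ℕ → Submodule ℝ X} (φ ψ : ∀ k, E k → F k) :
    0 ≤ ratioDist φ ψ :=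
  Real.sSup_nonneg (by rintro _ ⟨k, ζ, -, rfl⟩; positivity)

variable {A P : ℕ → X →L[ℝ] X} {a : ℕ → ℕ → ℝ} {f : ℕ → X → X} {L : ℕ → ℝ} {α : ℝ}

variable (A P f) in
/-- The fixed-point equation defining `x^φ_{n,·}(ξ)`, with `z k` in place of `φ_k(x^φ_{n,k}(ξ))`. -/
def SolvesPerronEq (n : ℕ) (ξ : X) (y z : ℕ → X) : Prop :=
  ∀ m, n ≤ m → y m = calA A m n ξ + ∑ k ∈ Ico n m, calA A m (k + 1) (P (k + 1) (f k (y k + z k)))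

theorem sum_Ico_le_mul_of_isLUB (ha : ∀ m n : ℕ, n ≤ m → 0 < a m n) (hL : ∀ k, 0 ≤ L k)
    (hα : IsLUB {r : ℝ | ∃ m n : ℕ, n < m ∧
      r = (∑ k ∈ Finset.Ico n m, a m (k + 1) * (a k n * L k)) / a m n} α)
    {m n : ℕ} (hnm : n ≤ m) :
    ∑ k ∈ Ico n m, a m (k + 1) * (a k n * L k) ≤ α * a m n := by
  rcases hnm.eq_or_lt with rfl | hlt
  · have hα0 : 0 ≤ α := by
      refine le_trans ?_ (hα.1 ⟨n + 1, n, lt_add_one n, rfl⟩)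
      rw [Nat.Ico_succ_singleton, sum_singleton]
      exact div_nonneg (mul_nonneg (ha _ _ le_rfl).le (mul_nonneg (ha _ _ le_rfl).le (hL n)))
        (ha _ _ n.le_succ).le
    simpa using mul_nonneg hα0 (ha n n le_rfl).le
  · exact (div_le_iff₀ (ha m n hnm)).1 (hα.1 ⟨m, n, hlt, rfl⟩)

theorem norm_calA_apply_le (hD1 : ∀ m n : ℕ, n ≤ m → ‖(calA A m n).comp (P n)‖ ≤ a m n)
    {m n : ℕ} (hnm : n ≤ m) {ξ : X} (hξ : P n ξ = ξ) :
    ‖calA A m n ξ‖ ≤ a m n * ‖ξ‖ := by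
  simpa [hξ] using ((calA A m n).comp (P n)).le_of_opNorm_le (hD1 m n hnm) ξ

theorem norm_sum_calA_le (hD1 : ∀ m n : ℕ, n ≤ m → ‖(calA A m n).comp (P n)‖ ≤ a m n)
    (hα : ∀ m n : ℕ, n ≤ m → ∑ k ∈ Ico n m, a m (k + 1) * (a k n * L k) ≤ α * a m n)
    {m n : ℕ} (hnm : n ≤ m) {ξ : X} {g : ℕ → X} {c : ℝ} (hc : 0 ≤ c)
    (hg : ∀ k, n ≤ k → ‖g k‖ ≤ L k * (c * (a k n * ‖ξ‖))) :
    ‖∑ k ∈ Ico n m, calA A m (k + 1) (P (k + 1) (g k))‖ ≤ α * c * (a m n * ‖ξ‖) :=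
  calc _ ≤ ∑ k ∈ Ico n m, a m (k + 1) * (L k * (c * (a k n * ‖ξ‖))) :=
        norm_sum_le_of_le _ fun k hk =>
          ((calA A m (k + 1)).comp (P (k + 1))).le_of_opNorm_le_of_le
            (hD1 m (k + 1) (mem_Ico.1 hk).2) (hg k (mem_Ico.1 hk).1)
    _ = (∑ k ∈ Ico n m, a m (k + 1) * (a k n * L k)) * (c * ‖ξ‖) := by
        rw [sum_mul]
        exact sum_congr rfl fun k _ => by ring
    _ ≤ α * a m n * (c * ‖ξ‖) :=
        mul_le_mul_of_nonneg_right (hα m n hnm) (mul_nonneg hc (norm_nonneg ξ))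
    _ = α * c * (a m n * ‖ξ‖) := by ring

theorem norm_le_of_solvesPerronEq (ha : ∀ m n : ℕ, n ≤ m → 0 < a m n)
    (hD1 : ∀ m n : ℕ, n ≤ m → ‖(calA A m n).comp (P n)‖ ≤ a m n)
    (hα : ∀ m n : ℕ, n ≤ m → ∑ k ∈ Ico n m, a m (k + 1) * (a k n * L k) ≤ α * a m n)
    (h2α : 2 * α < 1) (hL : ∀ k, 0 ≤ L k) (hf : ∀ k u, ‖f k u‖ ≤ L k * ‖u‖)
    {n : ℕ} {ξ : X} (hξ : ξ ≠ 0) (hPξ : P n ξ = ξ) {y z : ℕ → X} (hz : ∀ k, ‖z k‖ ≤ ‖y k‖)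
    (hyC : ∃ C, ∀ m, n ≤ m → ‖y m‖ ≤ C * (a m n * ‖ξ‖)) (hy : SolvesPerronEq A P f n ξ y z) :
    ∀ m, n ≤ m → ‖y m‖ ≤ 1 / (1 - 2 * α) * (a m n * ‖ξ‖) := by
  have hw : ∀ m, n ≤ m → 0 < a m n * ‖ξ‖ := fun m hm => mul_pos (ha m n hm) (norm_pos_iff.2 hξ)
  obtain ⟨C, hC⟩ := hyC
  refine forall_le_div_one_sub_mul_of_bootstrap (s := Set.Ici n) Set.nonempty_Ici hw h2α hC
    fun ρ hρ m hm => ?_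
  have hρ0 : 0 ≤ ρ :=
    nonneg_of_mul_nonneg_left ((norm_nonneg _).trans (hρ n Set.self_mem_Ici)) (hw n le_rfl)
  have hfy : ∀ k, n ≤ k → ‖f k (y k + z k)‖ ≤ L k * (2 * ρ * (a k n * ‖ξ‖)) := fun k hk =>
    (hf k _).trans (mul_le_mul_of_nonneg_left
      ((norm_add_le _ _).trans (by linarith [hz k, hρ k hk])) (hL k))
  rw [hy m hm]
  calc _ ≤ a m n * ‖ξ‖ + α * (2 * ρ) * (a m n * ‖ξ‖) :=
        (norm_add_le _ _).trans (add_le_add (norm_calA_apply_le hD1 hm hPξ)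
          (norm_sum_calA_le hD1 hα hm (by positivity) hfy))
    _ = (1 + 2 * α * ρ) * (a m n * ‖ξ‖) := by ring

theorem norm_sub_le_of_solvesPerronEq (ha : ∀ m n : ℕ, n ≤ m → 0 < a m n)
    (hD1 : ∀ m n : ℕ, n ≤ m → ‖(calA A m n).comp (P n)‖ ≤ a m n)
    (hα : ∀ m n : ℕ, n ≤ m → ∑ k ∈ Ico n m, a m (k + 1) * (a k n * L k) ≤ α * a m n)
    (h2α : 2 * α < 1) (hL : ∀ k, 0 ≤ L k) (hf : ∀ k u v, ‖f k u - f k v‖ ≤ L k * ‖u - v‖)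
    {n : ℕ} {ξ : X} (hξ : ξ ≠ 0) {x y x' y' : ℕ → X} {γ d : ℝ} (hd : 0 ≤ d)
    (hxC : ∃ C, ∀ m, n ≤ m → ‖x m‖ ≤ C * (a m n * ‖ξ‖))
    (hyγ : ∀ m, n ≤ m → ‖y m‖ ≤ γ * (a m n * ‖ξ‖))
    (hxy' : ∀ k, ‖x' k - y' k‖ ≤ ‖x k - y k‖ + d * ‖y k‖)
    (hx : SolvesPerronEq A P f n ξ x x') (hy : SolvesPerronEq A P f n ξ y y') :
    ∀ m, n ≤ m → ‖x m - y m‖ ≤ α * (d * γ) / (1 - 2 * α) * (a m n * ‖ξ‖) := by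
  have hw : ∀ m, n ≤ m → 0 < a m n * ‖ξ‖ := fun m hm => mul_pos (ha m n hm) (norm_pos_iff.2 hξ)
  have hγ : 0 ≤ γ :=
    nonneg_of_mul_nonneg_left ((norm_nonneg _).trans (hyγ n le_rfl)) (hw n le_rfl)
  obtain ⟨C, hC⟩ := hxC
  have hxyC : ∀ m, n ≤ m → ‖x m - y m‖ ≤ (C + γ) * (a m n * ‖ξ‖) := fun m hm =>
    (norm_sub_le _ _).trans (by linarith [hC m hm, hyγ m hm])
  refine forall_le_div_one_sub_mul_of_bootstrap (s := Set.Ici n) Set.nonempty_Ici hw h2α hxyC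
    fun ρ hρ m hm => ?_
  have hρ0 : 0 ≤ ρ :=
    nonneg_of_mul_nonneg_left ((norm_nonneg _).trans (hρ n Set.self_mem_Ici)) (hw n le_rfl)
  have hsub : x m - y m = ∑ k ∈ Ico n m,
      calA A m (k + 1) (P (k + 1) (f k (x k + x' k) - f k (y k + y' k))) := by
    rw [hx m hm, hy m hm, add_sub_add_left_eq_sub, ← sum_sub_distrib]
    simp only [map_sub]
  rw [hsub]
  calc _ ≤ α * (2 * ρ + d * γ) * (a m n * ‖ξ‖) :=
        norm_sum_calA_le hD1 hα hm (by positivity) fun k hk =>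
          norm_sub_apply_add_le (hf k) (hL k) hd (hρ k hk) (hyγ k hk) (hxy' k)
    _ = (α * (d * γ) + 2 * α * ρ) * (a m n * ‖ξ‖) := by ring

theorem norm_sub_apply_add_le_of_solvesPerronEq (ha : ∀ m n : ℕ, n ≤ m → 0 < a m n)
    (hD1 : ∀ m n : ℕ, n ≤ m → ‖(calA A m n).comp (P n)‖ ≤ a m n)
    (hα : ∀ m n : ℕ, n ≤ m → ∑ k ∈ Ico n m, a m (k + 1) * (a k n * L k) ≤ α * a m n)
    (h2α : 2 * α < 1) (hL : ∀ k, 0 ≤ L k) (hf0 : ∀ k, f k 0 = 0)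
    (hf : ∀ k u v, ‖f k u - f k v‖ ≤ L k * ‖u - v‖)
    {n : ℕ} {ξ : X} (hξ : ξ ≠ 0) (hPξ : P n ξ = ξ) {x y x' y' : ℕ → X} {d : ℝ} (hd : 0 ≤ d)
    (hy' : ∀ k, ‖y' k‖ ≤ ‖y k‖) (hxy' : ∀ k, ‖x' k - y' k‖ ≤ ‖x k - y k‖ + d * ‖y k‖)
    (hxC : ∃ C, ∀ m, n ≤ m → ‖x m‖ ≤ C * (a m n * ‖ξ‖))
    (hyC : ∃ C, ∀ m, n ≤ m → ‖y m‖ ≤ C * (a m n * ‖ξ‖))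
    (hx : SolvesPerronEq A P f n ξ x x') (hy : SolvesPerronEq A P f n ξ y y')
    (k : ℕ) (hk : n ≤ k) :
    ‖f k (x k + x' k) - f k (y k + y' k)‖ ≤ a k n * L k * (d / (1 - 2 * α) ^ 2 * ‖ξ‖) := by
  have h2α' : 1 - 2 * α ≠ 0 := by linarith
  have hyγ := norm_le_of_solvesPerronEq ha hD1 hα h2α hL
    (fun k u => by simpa [hf0 k] using hf k u 0) hξ hPξ hy' hyC hy
  have hxy := norm_sub_le_of_solvesPerronEq ha hD1 hα h2α hL hf hξ hd hxC hyγ hxy' hx hy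
  refine (norm_sub_apply_add_le (hf k) (hL k) hd (hxy k hk) (hyγ k hk) (hxy' k)).trans_eq ?_
  field_simp
  ring

end Dichotomy

theorem Phi_contraction_general
    {X : Type*} [NormedAddCommGroup X] [NormedSpace ℝ X]
    (A P : ℕ → X →L[ℝ] X) (B : ℕ → ℕ → X →L[ℝ] X) (a b : ℕ → ℕ → ℝ)
    -- the bounds are positive
    (ha : ∀ m n : ℕ, n ≤ m → 0 < a m n)
    -- the `P n` are bounded projections
    (hproj : ∀ n, (P n).comp (P n) = P n)
    -- (D1) : `‖𝒜_{m,n} P n‖ ≤ a m n`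
    (hD1 : ∀ m n : ℕ, n ≤ m → ‖(calA A m n).comp (P n)‖ ≤ a m n)
    -- (D2) : `‖(𝒜_{m,n}|_{F n})⁻¹ Q m‖ ≤ b m n`
    (hD2 : ∀ m n : ℕ, n ≤ m → ‖B m n‖ ≤ b m n)
    -- the perturbations `f k` vanish at `0` and are Lipschitz with constant `L k`
    (f : ℕ → X → X) (L : ℕ → ℝ) (hL0 : ∀ k, 0 ≤ L k) (hf0 : ∀ k, f k 0 = 0)
    (hLip : ∀ (k : ℕ) (u v : X), ‖f k u - f k v‖ ≤ L k * ‖u - v‖)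
    -- `α = sup_{m>n} (1/a_{m,n}) ∑_{k=n}^{m-1} a_{m,k+1} a_{k,n} Lip(f k) < ∞`
    (α : ℝ)
    (hα : IsLUB {r : ℝ | ∃ m n : ℕ, n < m ∧
      r = (∑ k ∈ Finset.Ico n m, a m (k + 1) * (a k n * L k)) / a m n} α)
    -- `β = sup_n ∑_{k=n}^{∞} b_{k+1,n} a_{k,n} Lip(f k) < ∞`
    (β : ℝ)
    (hsum : ∀ n : ℕ, Summable fun j : ℕ => b (n + j + 1) n * (a (n + j) n * L (n + j)))
    (hβ : IsLUB {r : ℝ | ∃ n : ℕ,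
      r = ∑' j : ℕ, b (n + j + 1) n * (a (n + j) n * L (n + j))} β)
    -- `2α + max {2β, √β} < 1`
    (hcond : 2 * α + max (2 * β) (Real.sqrt β) < 1)
    (φ : ∀ n : ℕ, LinearMap.range (P n : X →ₗ[ℝ] X) → LinearMap.ker (P n : X →ₗ[ℝ] X))
    (hφ : ((∀ n, φ n 0 = 0) ∧
      ∀ (n : ℕ) (ξ ξ' : LinearMap.range (P n : X →ₗ[ℝ] X)),
        ‖(φ n ξ : X) - (φ n ξ' : X)‖ ≤ ‖(ξ : X) - (ξ' : X)‖))
    (ψ : ∀ n : ℕ, LinearMap.range (P n : X →ₗ[ℝ] X) → LinearMap.ker (P n : X →ₗ[ℝ] X))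
    (hψ : ((∀ n, ψ n 0 = 0) ∧
      ∀ (n : ℕ) (ξ ξ' : LinearMap.range (P n : X →ₗ[ℝ] X)),
        ‖(ψ n ξ : X) - (ψ n ξ' : X)‖ ≤ ‖(ξ : X) - (ξ' : X)‖))
    (x : ∀ n m : ℕ, LinearMap.range (P n : X →ₗ[ℝ] X) → LinearMap.range (P m : X →ₗ[ℝ] X))
    (hx : ∀ n : ℕ, ((∀ m : ℕ, n ≤ m → x n m 0 = 0) ∧
      (∃ C : ℝ, ∀ m : ℕ, n ≤ m → ∀ ξ : LinearMap.range (P n : X →ₗ[ℝ] X),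
        ‖(x n m ξ : X)‖ ≤ C * (a m n * ‖(ξ : X)‖)) ∧
      (∀ m : ℕ, n ≤ m → ∀ ξ : LinearMap.range (P n : X →ₗ[ℝ] X),
        (x n m ξ : X) = calA A m n (ξ : X) +
          ∑ k ∈ Finset.Ico n m,
            calA A m (k + 1) (P (k + 1) (f k ((x n k ξ : X) + (φ k (x n k ξ) : X)))))))
    (y : ∀ n m : ℕ, LinearMap.range (P n : X →ₗ[ℝ] X) → LinearMap.range (P m : X →ₗ[ℝ] X))
    (hy : ∀ n : ℕ, ((∀ m : ℕ, n ≤ m → y n m 0 = 0) ∧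
      (∃ C : ℝ, ∀ m : ℕ, n ≤ m → ∀ ξ : LinearMap.range (P n : X →ₗ[ℝ] X),
        ‖(y n m ξ : X)‖ ≤ C * (a m n * ‖(ξ : X)‖)) ∧
      (∀ m : ℕ, n ≤ m → ∀ ξ : LinearMap.range (P n : X →ₗ[ℝ] X),
        (y n m ξ : X) = calA A m n (ξ : X) +
          ∑ k ∈ Finset.Ico n m,
            calA A m (k + 1) (P (k + 1) (f k ((y n k ξ : X) + (ψ k (y n k ξ) : X)))))))
    -- `φ' = Φ φ` and `ψ' = Φ ψ`
    (φ' ψ' : ∀ n : ℕ, LinearMap.range (P n : X →ₗ[ℝ] X) → LinearMap.ker (P n : X →ₗ[ℝ] X))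
    (hΦφ : ∀ (n : ℕ) (ξ : LinearMap.range (P n : X →ₗ[ℝ] X)),
      HasSum
        (fun j : ℕ => B (n + j + 1) n (f (n + j)
          ((x n (n + j) ξ : X) + (φ (n + j) (x n (n + j) ξ) : X))))
        (-(φ' n ξ : X)))
    (hΦψ : ∀ (n : ℕ) (ξ : LinearMap.range (P n : X →ₗ[ℝ] X)),
      HasSum
        (fun j : ℕ => B (n + j + 1) n (f (n + j)
          ((y n (n + j) ξ : X) + (ψ (n + j) (y n (n + j) ξ) : X))))
        (-(ψ' n ξ : X)))
    :
    (∀ (n : ℕ) (ξ : LinearMap.range (P n : X →ₗ[ℝ] X)), ξ ≠ 0 →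
      ‖(φ' n ξ : X) - (ψ' n ξ : X)‖ ≤
        β / (1 - 2 * α) ^ 2 *
          sSup {r : ℝ | ∃ (k : ℕ) (ζ : LinearMap.range (P k : X →ₗ[ℝ] X)), ζ ≠ 0 ∧
            r = ‖(φ k ζ : X) - (ψ k ζ : X)‖ / ‖(ζ : X)‖} *
          ‖(ξ : X)‖) ∧
    β / (1 - 2 * α) ^ 2 < 1 := by
  obtain ⟨hφ0, hφ⟩ := hφ
  obtain ⟨hψ0, hψ⟩ := hψ
  have hcond' : 2 * α + √β < 1 := by linarith [le_max_right (2 * β) √β]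
  refine ⟨fun n ξ hξ => ?_, div_one_sub_two_mul_sq_lt_one hcond'⟩
  have h2α : 2 * α < 1 := by linarith [Real.sqrt_nonneg β]
  have hφ1 : ∀ k ζ, ‖(φ k ζ : X)‖ ≤ ‖(ζ : X)‖ := fun k ζ => by simpa [hφ0 k] using hφ k ζ 0
  have hψ1 : ∀ k ζ, ‖(ψ k ζ : X)‖ ≤ ‖(ζ : X)‖ := fun k ζ => by simpa [hψ0 k] using hψ k ζ 0
  have hφψ : ∀ k, ‖(φ k (x n k ξ) : X) - ψ k (y n k ξ)‖ ≤
      ‖(x n k ξ : X) - y n k ξ‖ + ratioDist φ ψ * ‖(y n k ξ : X)‖ := fun k =>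
    (norm_sub_le_norm_sub_add_norm_sub _ (φ k (y n k ξ) : X) _).trans
      (add_le_add (hφ k _ _) (norm_sub_le_ratioDist_mul hφ1 hψ1 k _))
  have hPξ : P n ξ = ξ := (LinearMap.IsIdempotentElem.mem_range_iff
    (congrArg ContinuousLinearMap.toLinearMap (hproj n))).1 ξ.2
  obtain ⟨-, hxC, hx⟩ := hx n
  obtain ⟨-, hyC, hy⟩ := hy n
  have hf_sub := norm_sub_apply_add_le_of_solvesPerronEq ha hD1
    (fun m n hnm => sum_Ico_le_mul_of_isLUB ha hL0 hα hnm) h2α hL0 hf0 hLip (by simpa using hξ)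
    hPξ (ratioDist_nonneg φ ψ) (fun k => hψ1 k (y n k ξ)) hφψ
    (hxC.imp fun C hC m hm => hC m hm ξ) (hyC.imp fun C hC m hm => hC m hm ξ)
    (fun m hm => hx m hm ξ) (fun m hm => hy m hm ξ)
  have hΦ := norm_sub_le_of_hasSum (hΦφ n ξ) (hΦψ n ξ) (fun j => hD2 _ _ (by omega))
    (fun j => hf_sub (n + j) (n.le_add_right j)) (hsum n)
  rw [neg_sub_neg, norm_sub_rev] at hΦ
  calc _ ≤ _ := hΦ
    _ ≤ β * _ := mul_le_mul_of_nonneg_right (hβ.1 ⟨n, rfl⟩) (by positivity [ratioDist_nonneg φ ψ])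
    _ = β / (1 - 2 * α) ^ 2 * ratioDist φ ψ * ‖(ξ : X)‖ := by ring

/-- The operator `Φ` is a contraction on `(𝒳, d)` :
`d(Φ φ, Φ ψ) ≤ (β/(1-2α)²) d(φ, ψ)` with `β/(1-2α)² < 1`. -/
theorem Phi_contraction
    {X : Type*} [NormedAddCommGroup X] [NormedSpace ℝ X] [CompleteSpace X]
    (A P : ℕ → X →L[ℝ] X) (B : ℕ → ℕ → X →L[ℝ] X) (a b : ℕ → ℕ → ℝ)
    -- the bounds are positive
    (ha : ∀ m n : ℕ, n ≤ m → 0 < a m n) (hb : ∀ m n : ℕ, n ≤ m → 0 < b m n)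
    -- the `P n` are bounded projections
    (hproj : ∀ n, (P n).comp (P n) = P n)
    -- (S1) : `P m ∘ 𝒜_{m,n} = 𝒜_{m,n} ∘ P n`
    (hS1 : ∀ m n : ℕ, n ≤ m → (P m).comp (calA A m n) = (calA A m n).comp (P n))
    -- (S2)/(S3) : `B m n` is the operator `(𝒜_{m,n}|_{F n})⁻¹ ∘ Q m`, where `Q m = Id - P m`;
    -- its existence encodes that `𝒜_{m,n}` maps `F n = ker (P n)` bijectively onto `F m`
    (hB1 : ∀ m n : ℕ, n ≤ m → ∀ x : X, calA A m n (B m n x) = x - P m x)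
    (hB2 : ∀ m n : ℕ, n ≤ m → ∀ x : X, B m n (calA A m n x) = x - P n x)
    (hBF : ∀ m n : ℕ, n ≤ m → ∀ x : X, P n (B m n x) = 0)
    -- (D1) : `‖𝒜_{m,n} P n‖ ≤ a m n`
    (hD1 : ∀ m n : ℕ, n ≤ m → ‖(calA A m n).comp (P n)‖ ≤ a m n)
    -- (D2) : `‖(𝒜_{m,n}|_{F n})⁻¹ Q m‖ ≤ b m n`
    (hD2 : ∀ m n : ℕ, n ≤ m → ‖B m n‖ ≤ b m n)
    -- the perturbations `f k` vanish at `0` and are Lipschitz with constant `L k`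
    (f : ℕ → X → X) (L : ℕ → ℝ) (hL0 : ∀ k, 0 ≤ L k) (hf0 : ∀ k, f k 0 = 0)
    (hLip : ∀ (k : ℕ) (u v : X), ‖f k u - f k v‖ ≤ L k * ‖u - v‖)
    -- `α = sup_{m>n} (1/a_{m,n}) ∑_{k=n}^{m-1} a_{m,k+1} a_{k,n} Lip(f k) < ∞`
    (α : ℝ)
    (hα : IsLUB {r : ℝ | ∃ m n : ℕ, n < m ∧
      r = (∑ k ∈ Finset.Ico n m, a m (k + 1) * (a k n * L k)) / a m n} α)
    -- `β = sup_n ∑_{k=n}^{∞} b_{k+1,n} a_{k,n} Lip(f k) < ∞`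
    (β : ℝ)
    (hsum : ∀ n : ℕ, Summable fun j : ℕ => b (n + j + 1) n * (a (n + j) n * L (n + j)))
    (hβ : IsLUB {r : ℝ | ∃ n : ℕ,
      r = ∑' j : ℕ, b (n + j + 1) n * (a (n + j) n * L (n + j))} β)
    -- `2α + max {2β, √β} < 1`
    (hcond : 2 * α + max (2 * β) (Real.sqrt β) < 1)
    (φ : ∀ n : ℕ, LinearMap.range (P n : X →ₗ[ℝ] X) → LinearMap.ker (P n : X →ₗ[ℝ] X))
    (hφ : ((∀ n, φ n 0 = 0) ∧
      ∀ (n : ℕ) (ξ ξ' : LinearMap.range (P n : X →ₗ[ℝ] X)),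
        ‖(φ n ξ : X) - (φ n ξ' : X)‖ ≤ ‖(ξ : X) - (ξ' : X)‖))
    (ψ : ∀ n : ℕ, LinearMap.range (P n : X →ₗ[ℝ] X) → LinearMap.ker (P n : X →ₗ[ℝ] X))
    (hψ : ((∀ n, ψ n 0 = 0) ∧
      ∀ (n : ℕ) (ξ ξ' : LinearMap.range (P n : X →ₗ[ℝ] X)),
        ‖(ψ n ξ : X) - (ψ n ξ' : X)‖ ≤ ‖(ξ : X) - (ξ' : X)‖))
    (x : ∀ n m : ℕ, LinearMap.range (P n : X →ₗ[ℝ] X) → LinearMap.range (P m : X →ₗ[ℝ] X))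
    (hx : ∀ n : ℕ, ((∀ m : ℕ, n ≤ m → x n m 0 = 0) ∧
      (∃ C : ℝ, ∀ m : ℕ, n ≤ m → ∀ ξ : LinearMap.range (P n : X →ₗ[ℝ] X),
        ‖(x n m ξ : X)‖ ≤ C * (a m n * ‖(ξ : X)‖)) ∧
      (∀ m : ℕ, n ≤ m → ∀ ξ : LinearMap.range (P n : X →ₗ[ℝ] X),
        (x n m ξ : X) = calA A m n (ξ : X) +
          ∑ k ∈ Finset.Ico n m,
            calA A m (k + 1) (P (k + 1) (f k ((x n k ξ : X) + (φ k (x n k ξ) : X)))))))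
    (y : ∀ n m : ℕ, LinearMap.range (P n : X →ₗ[ℝ] X) → LinearMap.range (P m : X →ₗ[ℝ] X))
    (hy : ∀ n : ℕ, ((∀ m : ℕ, n ≤ m → y n m 0 = 0) ∧
      (∃ C : ℝ, ∀ m : ℕ, n ≤ m → ∀ ξ : LinearMap.range (P n : X →ₗ[ℝ] X),
        ‖(y n m ξ : X)‖ ≤ C * (a m n * ‖(ξ : X)‖)) ∧
      (∀ m : ℕ, n ≤ m → ∀ ξ : LinearMap.range (P n : X →ₗ[ℝ] X),
        (y n m ξ : X) = calA A m n (ξ : X) +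
          ∑ k ∈ Finset.Ico n m,
            calA A m (k + 1) (P (k + 1) (f k ((y n k ξ : X) + (ψ k (y n k ξ) : X)))))))
    -- `φ' = Φ φ` and `ψ' = Φ ψ`
    (φ' ψ' : ∀ n : ℕ, LinearMap.range (P n : X →ₗ[ℝ] X) → LinearMap.ker (P n : X →ₗ[ℝ] X))
    (hΦφ : ∀ (n : ℕ) (ξ : LinearMap.range (P n : X →ₗ[ℝ] X)),
      HasSum
        (fun j : ℕ => B (n + j + 1) n (f (n + j)
          ((x n (n + j) ξ : X) + (φ (n + j) (x n (n + j) ξ) : X))))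
        (-(φ' n ξ : X)))
    (hΦψ : ∀ (n : ℕ) (ξ : LinearMap.range (P n : X →ₗ[ℝ] X)),
      HasSum
        (fun j : ℕ => B (n + j + 1) n (f (n + j)
          ((y n (n + j) ξ : X) + (ψ (n + j) (y n (n + j) ξ) : X))))
        (-(ψ' n ξ : X)))
    :
    (∀ (n : ℕ) (ξ : LinearMap.range (P n : X →ₗ[ℝ] X)), ξ ≠ 0 →
      ‖(φ' n ξ : X) - (ψ' n ξ : X)‖ ≤
        β / (1 - 2 * α) ^ 2 *
          sSup {r : ℝ | ∃ (k : ℕ) (ζ : LinearMap.range (P k : X →ₗ[ℝ] X)), ζ ≠ 0 ∧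
            r = ‖(φ k ζ : X) - (ψ k ζ : X)‖ / ‖(ζ : X)‖} *
          ‖(ξ : X)‖) ∧
    β / (1 - 2 * α) ^ 2 < 1 :=
  Phi_contraction_general A P B a b ha hproj hD1 hD2 f L hL0 hf0 hLip α hα β hsum hβ hcond φ hφ ψ hψ
    x hx y hy φ' ψ' hΦφ hΦψ
end

section
/- Let (a_n), (b_n), (c_n), (d_n) be nondecreasing sequences of positive reals and set a_{m,n} = (a_n/a_m)c_n and b_{m,n} = (b_n/b_m)d_m for m ≥ n. Let (f_k)_{k∈ℕ} be Lipschitz maps on a Banach space X with f_k(0) = 0, and suppose there is a sequence (λ_k) of nonnegative reals with Σ_{k=1}^∞ λ_k = λ < 1/4 such that Lip(f_k) ≤ min{ a_k/(a_{k+1}c_{k+1}), a_k b_{k+1}/(d_{k+1}·max_{1≤i≤k}(a_i b_i c_i)) }·λ_k for every k. Then α := sup_{m>n} (1/a_{m,n}) Σ_{k=n}^{m−1} a_{m,k+1} a_{k,n} Lip(f_k) ≤ λ < +∞, β := sup_{n∈ℕ} Σ_{k=n}^{∞} b_{k+1,n} a_{k,n} Lip(f_k) ≤ λ < +∞, and 2α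 + max{2β, √β} < 1. -/
/-- For the dichotomy bounds `a_{m,n} = (a_n/a_m) c_n` and `b_{m,n} = (b_n/b_m) d_m` built
from nondecreasing sequences of positive reals, if
`Lip(f_k) ≤ min {a_k/(a_{k+1} c_{k+1}), a_k b_{k+1}/(d_{k+1} max_{i ≤ k} (a_i b_i c_i))} λ_k`
with `λ = ∑ λ_k < 1/4`, then `α ≤ λ < ∞`, `β ≤ λ < ∞` and `2α + max {2β, √β} < 1`. -/
theorem small_lipschitz_constants_give_conditions
    (a b c d : ℕ → ℝ)
    (hap : ∀ n, 0 < a n) (hbp : ∀ n, 0 < b n) (hcp : ∀ n, 0 < c n) (hdp : ∀ n, 0 < d n)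
    (hamono : Monotone a) (hbmono : Monotone b) (hcmono : Monotone c) (hdmono : Monotone d)
    {X : Type*} [NormedAddCommGroup X] [NormedSpace ℝ X] [CompleteSpace X]
    (f : ℕ → X → X) (L : ℕ → ℝ) (hL0 : ∀ k, 0 ≤ L k) (hf0 : ∀ k, f k 0 = 0)
    (hLip : ∀ (k : ℕ) (u v : X), ‖f k u - f k v‖ ≤ L k * ‖u - v‖)
    (lam : ℝ) (lseq : ℕ → ℝ) (hl0 : ∀ k, 0 ≤ lseq k)
    (hsum : HasSum lseq lam) (hlam : lam < 1 / 4)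
    -- `Lip(f_k) ≤ min {a_k/(a_{k+1} c_{k+1}), a_k b_{k+1}/(d_{k+1} max_{i ≤ k} (a_i b_i c_i))} λ_k`
    (hLb : ∀ k : ℕ, L k ≤
      min (a k / (a (k + 1) * c (k + 1)))
        (a k * b (k + 1) /
          (d (k + 1) *
            (Finset.Icc 0 k).sup' (Finset.nonempty_Icc.mpr (Nat.zero_le k))
              fun i => a i * b i * c i)) * lseq k) :
    ∃ α β : ℝ,
      -- `α = sup_{m>n} (1/a_{m,n}) ∑_{k=n}^{m-1} a_{m,k+1} a_{k,n} Lip(f_k) < ∞`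
      IsLUB {r : ℝ | ∃ m n : ℕ, n < m ∧
        r = (∑ k ∈ Finset.Ico n m,
              (a (k + 1) / a m * c (k + 1)) * ((a n / a k * c n) * L k)) /
            (a n / a m * c n)} α ∧
      (∀ n : ℕ, Summable fun j : ℕ =>
        (b n / b (n + j + 1) * d (n + j + 1)) * ((a n / a (n + j) * c n) * L (n + j))) ∧
      -- `β = sup_n ∑_{k=n}^{∞} b_{k+1,n} a_{k,n} Lip(f_k) < ∞`
      IsLUB {r : ℝ | ∃ n : ℕ,
        r = ∑' j : ℕ,
          (b n / b (n + j + 1) * d (n + j + 1)) * ((a n / a (n + j) * c n) * L (n + j))} β ∧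
      α ≤ lam ∧ β ≤ lam ∧
      2 * α + max (2 * β) (Real.sqrt β) < 1 := by
  have hlam0 : 0 ≤ lam := hsum.nonneg hl0
  -- pointwise bound for α-terms
  have keyA : ∀ m n k : ℕ,
      (a (k + 1) / a m * c (k + 1)) * ((a n / a k * c n) * L k)
        ≤ lseq k * (a n / a m * c n) := by
    intro m n k
    have hL' : L k ≤ a k / (a (k + 1) * c (k + 1)) * lseq k :=
      le_trans (hLb k) (mul_le_mul_of_nonneg_right (min_le_left _ _) (hl0 k))
    calc (a (k + 1) / a m * c (k + 1)) * ((a n / a k * c n) * L k)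
        ≤ (a (k + 1) / a m * c (k + 1)) *
            ((a n / a k * c n) * (a k / (a (k + 1) * c (k + 1)) * lseq k)) := by
          have h1 : 0 < a (k + 1) / a m * c (k + 1) :=
            mul_pos (div_pos (hap _) (hap _)) (hcp _)
          have h2 : 0 < a n / a k * c n :=
            mul_pos (div_pos (hap _) (hap _)) (hcp _)
          exact mul_le_mul_of_nonneg_left
            (mul_le_mul_of_nonneg_left hL' h2.le) h1.le
      _ = lseq k * (a n / a m * c n) := by
          field_simp [(hap m).ne', (hap k).ne', (hap (k+1)).ne', (hcp (k+1)).ne']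
  -- bound on elements of the α-set
  have hAle : ∀ m n : ℕ, n < m →
      (∑ k ∈ Finset.Ico n m,
          (a (k + 1) / a m * c (k + 1)) * ((a n / a k * c n) * L k)) /
        (a n / a m * c n) ≤ lam := by
    intro m n _
    have hD : 0 < a n / a m * c n := mul_pos (div_pos (hap _) (hap _)) (hcp _)
    rw [div_le_iff₀ hD]
    calc (∑ k ∈ Finset.Ico n m,
            (a (k + 1) / a m * c (k + 1)) * ((a n / a k * c n) * L k))
        ≤ ∑ k ∈ Finset.Ico n m, lseq k * (a n / a m * c n) :=
          Finset.sum_le_sum fun k _ => keyA m n k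
      _ = (∑ k ∈ Finset.Ico n m, lseq k) * (a n / a m * c n) := by
          rw [Finset.sum_mul]
      _ ≤ lam * (a n / a m * c n) :=
          mul_le_mul_of_nonneg_right
            (sum_le_hasSum _ (fun i _ => hl0 i) hsum) hD.le
  -- pointwise bound for β-terms
  have keyB : ∀ n j : ℕ,
      (b n / b (n + j + 1) * d (n + j + 1)) * ((a n / a (n + j) * c n) * L (n + j))
        ≤ lseq (n + j) := by
    intro n j
    set k := n + j with hk
    set M := (Finset.Icc 0 k).sup' (Finset.nonempty_Icc.mpr (Nat.zero_le k))
      (fun i => a i * b i * c i) with hM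
    have hMn : a n * b n * c n ≤ M :=
      Finset.le_sup' (f := fun i => a i * b i * c i)
        (Finset.mem_Icc.mpr ⟨Nat.zero_le n, Nat.le_add_right n j⟩)
    have hMpos : 0 < M :=
      lt_of_lt_of_le (mul_pos (mul_pos (hap n) (hbp n)) (hcp n)) hMn
    have hL' : L k ≤ a k * b (k + 1) / (d (k + 1) * M) * lseq k :=
      le_trans (hLb k) (mul_le_mul_of_nonneg_right (min_le_right _ _) (hl0 k))
    calc (b n / b (k + 1) * d (k + 1)) * ((a n / a k * c n) * L k)
        ≤ (b n / b (k + 1) * d (k + 1)) *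
            ((a n / a k * c n) * (a k * b (k + 1) / (d (k + 1) * M) * lseq k)) := by
          have h1 : 0 < b n / b (k + 1) * d (k + 1) :=
            mul_pos (div_pos (hbp _) (hbp _)) (hdp _)
          have h2 : 0 < a n / a k * c n :=
            mul_pos (div_pos (hap _) (hap _)) (hcp _)
          exact mul_le_mul_of_nonneg_left
            (mul_le_mul_of_nonneg_left hL' h2.le) h1.le
      _ = (a n * b n * c n) / M * lseq k := by
          field_simp [(hap k).ne', (hbp (k+1)).ne', (hdp (k+1)).ne', hMpos.ne']
      _ ≤ 1 * lseq k :=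
          mul_le_mul_of_nonneg_right ((div_le_one hMpos).mpr hMn) (hl0 k)
      _ = lseq k := one_mul _
  have hBnonneg : ∀ n j : ℕ,
      0 ≤ (b n / b (n + j + 1) * d (n + j + 1)) * ((a n / a (n + j) * c n) * L (n + j)) := by
    intro n j
    exact mul_nonneg
      (mul_nonneg (div_nonneg (hbp _).le (hbp _).le) (hdp _).le)
      (mul_nonneg (mul_nonneg (div_nonneg (hap _).le (hap _).le) (hcp _).le) (hL0 _))
  have hBsummable : ∀ n : ℕ, Summable fun j : ℕ =>
      (b n / b (n + j + 1) * d (n + j + 1)) * ((a n / a (n + j) * c n) * L (n + j)) := by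
    intro n
    refine Summable.of_nonneg_of_le (hBnonneg n) (fun j => ?_)
      ((summable_nat_add_iff n).mpr hsum.summable)
    rw [Nat.add_comm j n]
    exact keyB n j
  have hBle : ∀ n : ℕ,
      (∑' j : ℕ,
        (b n / b (n + j + 1) * d (n + j + 1)) * ((a n / a (n + j) * c n) * L (n + j)))
        ≤ lam := by
    intro n
    have h := Summable.tsum_le_tsum_of_inj (fun j : ℕ => n + j) (add_right_injective n)
      (fun c _ => hl0 c) (fun j => keyB n j) (hBsummable n) hsum.summable
    rwa [hsum.tsum_eq] at h
  -- the two sets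
  set S : Set ℝ := {r : ℝ | ∃ m n : ℕ, n < m ∧
    r = (∑ k ∈ Finset.Ico n m,
          (a (k + 1) / a m * c (k + 1)) * ((a n / a k * c n) * L k)) /
        (a n / a m * c n)} with hSdef
  set T : Set ℝ := {r : ℝ | ∃ n : ℕ,
    r = ∑' j : ℕ,
      (b n / b (n + j + 1) * d (n + j + 1)) * ((a n / a (n + j) * c n) * L (n + j))} with hTdef
  have hSne : S.Nonempty := ⟨_, 1, 0, Nat.zero_lt_one, rfl⟩
  have hSbdd : ∀ r ∈ S, r ≤ lam := by
    rintro r ⟨m, n, hnm, rfl⟩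
    exact hAle m n hnm
  have hTne : T.Nonempty := ⟨_, 0, rfl⟩
  have hTbdd : ∀ r ∈ T, r ≤ lam := by
    rintro r ⟨n, rfl⟩
    exact hBle n
  refine ⟨sSup S, sSup T, isLUB_csSup hSne ⟨lam, hSbdd⟩, hBsummable,
    isLUB_csSup hTne ⟨lam, hTbdd⟩, csSup_le hSne hSbdd, csSup_le hTne hTbdd, ?_⟩
  have hα : sSup S ≤ lam := csSup_le hSne hSbdd
  have hβ : sSup T ≤ lam := csSup_le hTne hTbdd
  have hsq : Real.sqrt (sSup T) < 1 / 2 := by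
    have h1 : Real.sqrt (sSup T) ≤ Real.sqrt lam := Real.sqrt_le_sqrt hβ
    have h2 : Real.sqrt lam < 1 / 2 := by
      rw [show (1:ℝ)/2 = Real.sqrt (1/4) by
        rw [show (1:ℝ)/4 = (1/2)^2 by norm_num, Real.sqrt_sq (by norm_num)]]
      exact Real.sqrt_lt_sqrt hlam0 hlam
    linarith
  have hmax : max (2 * sSup T) (Real.sqrt (sSup T)) < 1 / 2 :=
    max_lt (by linarith) hsq
  linarith
end
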